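/- Let λ = (λ₁, λ₂, λ₃) be a probability vector with positive entries in nondecreasing order satisfying √λ₁ + √λ₂ ≤ √λ₃. Set s₁₁ = λ₁/3 + (4/9)√(λ₁λ₂), s₂₂ = λ₂/3 + (4/9)√(λ₁λ₂), s₃₃ = λ₃/3, s₁₂ = (7/9)√(λ₁λ₂), s₁₃ = (1/3)√(λ₁λ₃), s₂₃ = (1/3)√(λ₂λ₃), and a_{ij} = √(λ_iλ_j) for i > j. Then: (i) s_{ij} ≥ √(λ_iλ_j)/3 and a_{ij} ≥ √(λ_iλ_j) for all i ≥ j resp. i > j; (ii) the operator ∑_{i≥j} s_{ij} σ_{ij}^Γ + ∑_{i>j} a_{ij} α_{ij}^Γ on ℂ³⊗ℂ³ is positive semidefinite; (iii) ∑_{i≥j} s_{ij} + ∑_{i>j} a_{ij} = (1 + 4√(λ₂λ₃) + 4√(λ₁λ₃) + 8√(λ₁λ₂))/3. -/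

import Mathlib

/-- The basis vector `|ij⟩` of `ℂ³ ⊗ ℂ³` (real coefficients). -/
def ketR (i j : Fin 3) : Fin 3 × Fin 3 → ℝ := fun p => if p = (i, j) then 1 else 0

/-- `σ_{ij} = (|ij⟩+|ji⟩)(⟨ij|+⟨ji|)/2` for `i ≠ j`, `σ_{ii} = |ii⟩⟨ii|`. -/
noncomputable def sigmaOp (i j : Fin 3) : Matrix (Fin 3 × Fin 3) (Fin 3 × Fin 3) ℝ :=
  if i = j then Matrix.vecMulVec (ketR i i) (ketR i i)
  else (1/2 : ℝ) • Matrix.vecMulVec (ketR i j + ketR j i) (ketR i j + ketR j i)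

/-- `α_{ij} = (|ij⟩−|ji⟩)(⟨ij|−⟨ji|)/2`. -/
noncomputable def alphaOp (i j : Fin 3) : Matrix (Fin 3 × Fin 3) (Fin 3 × Fin 3) ℝ :=
  (1/2 : ℝ) • Matrix.vecMulVec (ketR i j - ketR j i) (ketR i j - ketR j i)

/-- Partial transpose: `(|ij⟩⟨kl|)^Γ = |il⟩⟨kj|`. -/
def ptransR (M : Matrix (Fin 3 × Fin 3) (Fin 3 × Fin 3) ℝ) :
    Matrix (Fin 3 × Fin 3) (Fin 3 × Fin 3) ℝ :=
  fun p q => M (p.1, q.2) (q.1, p.2)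

/-!
Write `p, q, r` for `√λ₁, √λ₂, √λ₃`. The partially transposed operator equals
`(1/3)|v⟩⟨v| + (4/9)pq|w⟩⟨w| + (8/9)pq P₁₂ + (2/3)pr P₁₃ + (2/3)qr P₂₃`, where
`v = r|33⟩ - p|11⟩ - q|22⟩`, `w = |11⟩ - |22⟩` and `P_ij` projects onto `span{|ij⟩, |ji⟩}`,
so it is positive semidefinite. The extra `(4/9)pq` in `s₁₁` and `s₂₂` is the diagonal of
`(4/9)pq|w⟩⟨w|`, whose off-diagonal part cancels the surplus of the `|11⟩⟨22|` coefficient of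
`(1/3)|v⟩⟨v|` over that of the operator.
-/

open Matrix

lemma Fin.sum_sum_filter_le_three {M : Type*} [AddCommMonoid M] (f : Fin 3 → Fin 3 → M) :
    ∑ i, ∑ j ∈ Finset.univ.filter (fun j => j ≤ i), f i j
      = f 0 0 + (f 1 0 + f 1 1) + (f 2 0 + f 2 1 + f 2 2) := by
  simp [Fin.sum_univ_three, Finset.sum_filter, add_assoc]

lemma Fin.sum_sum_filter_lt_three {M : Type*} [AddCommMonoid M] (f : Fin 3 → Fin 3 → M) :
    ∑ i, ∑ j ∈ Finset.univ.filter (fun j => j < i), f i j = f 1 0 + (f 2 0 + f 2 1) := by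
  simp [Fin.sum_univ_three, Finset.sum_filter]

lemma posSemidef_smul_vecMulVec_self {n : Type*} [Fintype n] {c : ℝ} (hc : 0 ≤ c)
    (v : n → ℝ) : (c • vecMulVec v v).PosSemidef := by
  simpa using (posSemidef_vecMulVec_self_star v).smul hc

section PartialTranspose

variable (A B : Matrix (Fin 3 × Fin 3) (Fin 3 × Fin 3) ℝ)

lemma ptransR_add : ptransR (A + B) = ptransR A + ptransR B := rfl

lemma ptransR_sub : ptransR (A - B) = ptransR A - ptransR B := rfl

lemma ptransR_smul (c : ℝ) : ptransR (c • A) = c • ptransR A := rfl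

end PartialTranspose

lemma ptransR_vecMulVec_ketR (i j k l : Fin 3) :
    ptransR (vecMulVec (ketR i j) (ketR k l)) = vecMulVec (ketR i l) (ketR k j) := by
  ext ⟨a, b⟩ ⟨c, d⟩
  simp only [ptransR, vecMulVec_apply, ketR, Prod.mk.injEq]
  by_cases ha : a = i <;> by_cases hb : b = l <;> by_cases hc : c = k <;>
    by_cases hd : d = j <;> simp [ha, hb, hc, hd]

lemma ptransR_sigmaOp_self (i : Fin 3) :
    ptransR (sigmaOp i i) = vecMulVec (ketR i i) (ketR i i) := by
  rw [sigmaOp, if_pos rfl, ptransR_vecMulVec_ketR]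

lemma ptransR_sigmaOp_of_ne {i j : Fin 3} (h : i ≠ j) :
    ptransR (sigmaOp i j) = (1/2 : ℝ) • (vecMulVec (ketR i j) (ketR i j)
      + vecMulVec (ketR i i) (ketR j j) + vecMulVec (ketR j j) (ketR i i)
      + vecMulVec (ketR j i) (ketR j i)) := by
  rw [sigmaOp, if_neg h]
  simp only [add_vecMulVec, vecMulVec_add, ptransR_smul, ptransR_add, ptransR_vecMulVec_ketR]
  module

lemma ptransR_alphaOp (i j : Fin 3) :
    ptransR (alphaOp i j) = (1/2 : ℝ) • (vecMulVec (ketR i j) (ketR i j)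
      - vecMulVec (ketR i i) (ketR j j) - vecMulVec (ketR j j) (ketR i i)
      + vecMulVec (ketR j i) (ketR j i)) := by
  rw [alphaOp]
  simp only [sub_vecMulVec, vecMulVec_sub, ptransR_smul, ptransR_sub, ptransR_vecMulVec_ketR]
  module

/-- The operator of the theorem when `λ = (p², q², r²)`. -/
noncomputable def witnessOp (p q r : ℝ) : Matrix (Fin 3 × Fin 3) (Fin 3 × Fin 3) ℝ :=
  (p * p / 3 + 4/9 * (p * q)) • ptransR (sigmaOp 0 0)
    + ((7/9 * (p * q)) • ptransR (sigmaOp 1 0)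
      + (q * q / 3 + 4/9 * (p * q)) • ptransR (sigmaOp 1 1))
    + ((1/3 * (p * r)) • ptransR (sigmaOp 2 0) + (1/3 * (q * r)) • ptransR (sigmaOp 2 1)
      + (r * r / 3) • ptransR (sigmaOp 2 2))
    + ((p * q) • ptransR (alphaOp 1 0)
      + ((p * r) • ptransR (alphaOp 2 0) + (q * r) • ptransR (alphaOp 2 1)))

lemma witnessOp_eq_sum_vecMulVec (p q r : ℝ) :
    witnessOp p q r
      = (1/3 : ℝ) • vecMulVec (r • ketR 2 2 - p • ketR 0 0 - q • ketR 1 1)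
          (r • ketR 2 2 - p • ketR 0 0 - q • ketR 1 1)
        + (4/9 * (p * q)) • vecMulVec (ketR 0 0 - ketR 1 1) (ketR 0 0 - ketR 1 1)
        + (8/9 * (p * q)) • (vecMulVec (ketR 1 0) (ketR 1 0) + vecMulVec (ketR 0 1) (ketR 0 1))
        + (2/3 * (p * r)) • (vecMulVec (ketR 2 0) (ketR 2 0) + vecMulVec (ketR 0 2) (ketR 0 2))
        + (2/3 * (q * r)) • (vecMulVec (ketR 2 1) (ketR 2 1) + vecMulVec (ketR 1 2) (ketR 1 2)) := by
  rw [witnessOp, ptransR_sigmaOp_self, ptransR_sigmaOp_self, ptransR_sigmaOp_self,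
    ptransR_sigmaOp_of_ne (by decide), ptransR_sigmaOp_of_ne (by decide),
    ptransR_sigmaOp_of_ne (by decide), ptransR_alphaOp, ptransR_alphaOp, ptransR_alphaOp]
  simp only [sub_vecMulVec, vecMulVec_sub, smul_vecMulVec, vecMulVec_smul]
  module

lemma witnessOp_posSemidef {p q r : ℝ} (hp : 0 ≤ p) (hq : 0 ≤ q) (hr : 0 ≤ r) :
    (witnessOp p q r).PosSemidef := by
  have hpq := mul_nonneg hp hq
  have hpr := mul_nonneg hp hr
  have hqr := mul_nonneg hq hr
  rw [witnessOp_eq_sum_vecMulVec, smul_add, smul_add, smul_add]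
  refine .add (.add (.add (.add ?_ ?_) (.add ?_ ?_)) (.add ?_ ?_)) (.add ?_ ?_) <;>
    exact posSemidef_smul_vecMulVec_self (by positivity) _

theorem stmt16_general (l : Fin 3 → ℝ) (hpos : 0 < l 0) (h01 : l 0 ≤ l 1) (h12 : l 1 ≤ l 2)
    (hsum : l 0 + l 1 + l 2 = 1)
    (s a : Fin 3 → Fin 3 → ℝ)
    (hs00 : s 0 0 = l 0 / 3 + (4/9) * Real.sqrt (l 0 * l 1))
    (hs11 : s 1 1 = l 1 / 3 + (4/9) * Real.sqrt (l 0 * l 1))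
    (hs22 : s 2 2 = l 2 / 3)
    (hs10 : s 1 0 = (7/9) * Real.sqrt (l 0 * l 1))
    (hs20 : s 2 0 = (1/3) * Real.sqrt (l 0 * l 2))
    (hs21 : s 2 1 = (1/3) * Real.sqrt (l 1 * l 2))
    (ha : ∀ i j : Fin 3, j < i → a i j = Real.sqrt (l i * l j)) :
    (∀ i j : Fin 3, j ≤ i → Real.sqrt (l i * l j) / 3 ≤ s i j) ∧
    (∀ i j : Fin 3, j < i → Real.sqrt (l i * l j) ≤ a i j) ∧
    (∑ i, ∑ j ∈ Finset.univ.filter (fun j => j ≤ i), s i j • ptransR (sigmaOp i j)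
      + ∑ i, ∑ j ∈ Finset.univ.filter (fun j => j < i), a i j • ptransR (alphaOp i j)).PosSemidef ∧
    (∑ i, ∑ j ∈ Finset.univ.filter (fun j => j ≤ i), s i j)
      + (∑ i, ∑ j ∈ Finset.univ.filter (fun j => j < i), a i j)
      = (1 + 4 * Real.sqrt (l 1 * l 2) + 4 * Real.sqrt (l 0 * l 2)
          + 8 * Real.sqrt (l 0 * l 1)) / 3 := by
  have hl : ∀ i, 0 ≤ l i := fun i => by
    fin_cases i <;> simp only [Fin.zero_eta, Fin.mk_one, Fin.reduceFinMk] <;> linarith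
  have hsqrt_mul : ∀ i j, √(l i * l j) = √(l i) * √(l j) := fun i j => Real.sqrt_mul (hl i) _
  have hmul_self : ∀ i, l i = √(l i) * √(l i) := fun i => (Real.mul_self_sqrt (hl i)).symm
  have ha10 := ha 1 0 (by decide)
  have ha20 := ha 2 0 (by decide)
  have ha21 := ha 2 1 (by decide)
  refine ⟨fun i j hij => ?_, fun i j hij => (ha i j hij).ge, ?_, ?_⟩
  · have hpq := mul_nonneg (Real.sqrt_nonneg (l 0)) (Real.sqrt_nonneg (l 1))
    fin_cases i <;> fin_cases j <;> first
      | exact absurd hij (by decide)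
      | simp only [Fin.zero_eta, Fin.mk_one, Fin.reduceFinMk, hs00, hs11, hs22, hs10, hs20, hs21,
          hsqrt_mul, ← hmul_self]
        linarith
  · convert witnessOp_posSemidef (Real.sqrt_nonneg (l 0)) (Real.sqrt_nonneg (l 1))
      (Real.sqrt_nonneg (l 2)) using 1
    rw [Fin.sum_sum_filter_le_three, Fin.sum_sum_filter_lt_three, hs00, hs11, hs22, hs10, hs20,
      hs21, ha10, ha20, ha21, witnessOp]
    simp only [hsqrt_mul, ← hmul_self]
    module
  · rw [Fin.sum_sum_filter_le_three, Fin.sum_sum_filter_lt_three, hs00, hs11, hs22, hs10,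
      hs20, hs21, ha10, ha20, ha21]
    simp only [hsqrt_mul]
    linear_combination hsum / 3

/-- The explicit point `(s*, a*)` is feasible for the primal SDP with
`K = 2` and attains objective value `(1 + 4√(λ₂λ₃) + 4√(λ₁λ₃) + 8√(λ₁λ₂))/3`
(indices 0-based: `l 0 = λ₁ ≤ l 1 = λ₂ ≤ l 2 = λ₃`). -/
theorem stmt16 (l : Fin 3 → ℝ) (hpos : 0 < l 0) (h01 : l 0 ≤ l 1) (h12 : l 1 ≤ l 2)
    (hsum : l 0 + l 1 + l 2 = 1)
    (hsqrt : Real.sqrt (l 0) + Real.sqrt (l 1) ≤ Real.sqrt (l 2))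
    (s a : Fin 3 → Fin 3 → ℝ)
    (hs00 : s 0 0 = l 0 / 3 + (4/9) * Real.sqrt (l 0 * l 1))
    (hs11 : s 1 1 = l 1 / 3 + (4/9) * Real.sqrt (l 0 * l 1))
    (hs22 : s 2 2 = l 2 / 3)
    (hs10 : s 1 0 = (7/9) * Real.sqrt (l 0 * l 1))
    (hs20 : s 2 0 = (1/3) * Real.sqrt (l 0 * l 2))
    (hs21 : s 2 1 = (1/3) * Real.sqrt (l 1 * l 2))
    (ha : ∀ i j : Fin 3, j < i → a i j = Real.sqrt (l i * l j)) :
    (∀ i j : Fin 3, j ≤ i → Real.sqrt (l i * l j) / 3 ≤ s i j) ∧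
    (∀ i j : Fin 3, j < i → Real.sqrt (l i * l j) ≤ a i j) ∧
    (∑ i, ∑ j ∈ Finset.univ.filter (fun j => j ≤ i), s i j • ptransR (sigmaOp i j)
      + ∑ i, ∑ j ∈ Finset.univ.filter (fun j => j < i), a i j • ptransR (alphaOp i j)).PosSemidef ∧
    (∑ i, ∑ j ∈ Finset.univ.filter (fun j => j ≤ i), s i j)
      + (∑ i, ∑ j ∈ Finset.univ.filter (fun j => j < i), a i j)
      = (1 + 4 * Real.sqrt (l 1 * l 2) + 4 * Real.sqrt (l 0 * l 2)
          + 8 * Real.sqrt (l 0 * l 1)) / 3 :=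
  stmt16_general l hpos h01 h12 hsum s a hs00 hs11 hs22 hs10 hs20 hs21 ha
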